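/- Let k ≥ 2 and suppose for all pairwise λ-separated (k)-tuples x₁,...,x_k ∈ ℤ^d there is a constant B with Σ_{x_{k+1}∈ℤ^d} ∏_{i=1}^{k} 1_{S_λ}(x_i - x_{k+1}) ≤ B·M_k, where M_k is the k-th normalization constant. Then the (k+1)-simplex form satisfies Λ_{K_{k+1}}(f₁,...,f_{k+1}) ≤ B · ‖f_{k+1}‖_{ℓ^∞} · Λ_{K_k}(f₁,...,f_k) for all nonnegative f₁,...,f_{k+1} : ℤ^d → ℝ. -/
import Mathlib


open MeasureTheory ENNReal

noncomputable section

/-- The sphere `{y ∈ ℤ^d : |y|² = λ}`. -/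
def sph (d lam : ℕ) : Set (Fin d → ℤ) := {y | (∑ i, (y i) ^ 2) = (lam : ℤ)}

/-- The indicator function of the sphere `S_λ`. -/
def sphInd (d lam : ℕ) (x : Fin d → ℤ) : ℝ := if (∑ i, (x i) ^ 2) = (lam : ℤ) then 1 else 0

/-- `N_λ`, the number of lattice points on the sphere. -/
def Nlam (d lam : ℕ) : ℕ := (sph d lam).ncard

/-- The discrete spherical averaging operator. -/
def Aavg (d lam : ℕ) (f : (Fin d → ℤ) → ℝ) (x : Fin d → ℤ) : ℝ :=
  ((Nlam d lam : ℝ))⁻¹ * ∑' y, sphInd d lam y * f (x - y)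

lemma sphInd_nonneg (d lam : ℕ) (x : Fin d → ℤ) : 0 ≤ sphInd d lam x := by
  unfold sphInd; split <;> norm_num

lemma sph_finite (d lam : ℕ) : (sph d lam).Finite := by
  have hsub : sph d lam ⊆ Set.pi Set.univ (fun _ => Set.Icc (-(lam:ℤ)) (lam:ℤ)) := by
    intro y hy i _
    have h2 : (y i) ^ 2 ≤ (lam : ℤ) := by
      have := Finset.single_le_sum (f := fun j => (y j) ^ 2) (fun j _ => sq_nonneg _)
        (Finset.mem_univ i)
      rw [hy] at this; exact this
    have hl : (0:ℤ) ≤ (lam:ℤ) := Int.natCast_nonneg lam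
    constructor
    · nlinarith [sq_nonneg (y i + 1)]
    · nlinarith [sq_nonneg (y i - 1)]
  exact Set.Finite.subset (Set.Finite.pi (fun _ => Set.finite_Icc _ _)) hsub

lemma tsum_ind_eq (d lam k : ℕ) (hk : 0 < k) (x : Fin k → Fin d → ℤ) :
    (∑' y : Fin d → ℤ, ∏ i, ENNReal.ofReal (sphInd d lam (x i - y)))
      = ENNReal.ofReal (∑' y : Fin d → ℤ, ∏ i, sphInd d lam (x i - y)) := by
  have hnn : ∀ y : Fin d → ℤ, 0 ≤ ∏ i, sphInd d lam (x i - y) :=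
    fun y => Finset.prod_nonneg fun i _ => sphInd_nonneg _ _ _
  have hsupp : (Function.support fun y : Fin d → ℤ =>
      ∏ i, sphInd d lam (x i - y)).Finite := by
    apply Set.Finite.subset ((sph_finite d lam).image (fun v => x ⟨0, hk⟩ - v))
    intro y hy
    have h0 : sphInd d lam (x ⟨0, hk⟩ - y) ≠ 0 := by
      intro h
      exact hy (Finset.prod_eq_zero (Finset.mem_univ _) h)
    have hmem : x ⟨0, hk⟩ - y ∈ sph d lam := by
      by_contra hc
      exact h0 (if_neg hc)
    exact ⟨x ⟨0, hk⟩ - y, hmem, sub_sub_cancel _ _⟩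
  rw [ENNReal.ofReal_tsum_of_nonneg hnn (summable_of_finite_support hsupp)]
  exact tsum_congr fun y =>
    (ENNReal.ofReal_prod_of_nonneg fun i _ => sphInd_nonneg _ _ _).symm

/-- The `j`-simplex form `Λ_{K_j}`, with normalization `∏_{i=1}^{j-1} M_i`
(where `M 1 = N_λ`), valued in `ℝ≥0∞`. -/
def ΛKsimplex (d lam j : ℕ) (M : ℕ → ℝ) (f : Fin j → (Fin d → ℤ) → ℝ) : ℝ≥0∞ :=
  (ENNReal.ofReal (∏ i ∈ Finset.range (j - 1), M (i + 1)))⁻¹ *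
    ∑' x : Fin j → (Fin d → ℤ),
      (∏ i, ENNReal.ofReal (f i (x i))) *
        ∏ i : Fin j, ∏ l : Fin j,
          if (i : ℕ) < (l : ℕ) then ENNReal.ofReal (sphInd d lam (x i - x l)) else 1

/-- `Λ_{K_{k+1}}(f₁,…,f_{k+1}) ≤ B · ‖f_{k+1}‖_∞ · Λ_{K_k}(f₁,…,f_k)`. -/
theorem simplex_recursion_bound (d lam k : ℕ) (hk : 2 ≤ k)
    (M : ℕ → ℝ) (hM : ∀ i, 0 < M i) (hM1 : M 1 = (Nlam d lam : ℝ)) (B : ℝ)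
    (hB : ∀ x : Fin k → (Fin d → ℤ),
      (∀ i l : Fin k, i ≠ l → x i - x l ∈ sph d lam) →
      (∑' y : Fin d → ℤ, ∏ i, sphInd d lam (x i - y)) ≤ B * M k)
    (f : Fin (k + 1) → (Fin d → ℤ) → ℝ) (hf : ∀ i x, 0 ≤ f i x) :
    ΛKsimplex d lam (k + 1) M f ≤
      ENNReal.ofReal B * eLpNorm (f (Fin.last k)) ⊤ Measure.count *
        ΛKsimplex d lam k M (fun i => f i.castSucc) := by
  classical
  obtain ⟨m, rfl⟩ : ∃ m, k = m + 1 := ⟨k - 1, by omega⟩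
  have hk0 : 0 < m + 1 := Nat.succ_pos m
  set C := eLpNorm (f (Fin.last (m+1))) ⊤ Measure.count with hC
  set P : (Fin (m+1) → Fin d → ℤ) → ℝ≥0∞ :=
    fun x => ∏ i : Fin (m+1), ENNReal.ofReal (f i.castSucc (x i)) with hP
  set Fk : (Fin (m+1) → Fin d → ℤ) → ℝ≥0∞ :=
    fun x => ∏ i : Fin (m+1), ∏ l : Fin (m+1),
      if (i : ℕ) < (l : ℕ) then ENNReal.ofReal (sphInd d lam (x i - x l)) else 1 with hFk
  -- pointwise expansion of the (k+1)-fold summand along `Fin.snoc`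
  have key : ∀ (y : Fin d → ℤ) (x : Fin (m+1) → Fin d → ℤ),
      (∏ i : Fin (m+1+1), ENNReal.ofReal (f i (Fin.snoc (α := fun _ => Fin d → ℤ) x y i))) *
        (∏ i : Fin (m+1+1), ∏ l : Fin (m+1+1),
          if (i : ℕ) < (l : ℕ) then
            ENNReal.ofReal (sphInd d lam (Fin.snoc (α := fun _ => Fin d → ℤ) x y i - Fin.snoc (α := fun _ => Fin d → ℤ) x y l)) else 1)
      = (P x * Fk x) *
          (ENNReal.ofReal (f (Fin.last (m+1)) y) *
            ∏ i : Fin (m+1), ENNReal.ofReal (sphInd d lam (x i - y))) := by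
    intro y x
    have h1 : (∏ i : Fin (m+1+1), ENNReal.ofReal (f i (Fin.snoc (α := fun _ => Fin d → ℤ) x y i)))
        = P x * ENNReal.ofReal (f (Fin.last (m+1)) y) := by
      rw [Fin.prod_univ_castSucc]
      simp [hP]
    have h2 : (∏ i : Fin (m+1+1), ∏ l : Fin (m+1+1),
          if (i : ℕ) < (l : ℕ) then
            ENNReal.ofReal (sphInd d lam (Fin.snoc (α := fun _ => Fin d → ℤ) x y i - Fin.snoc (α := fun _ => Fin d → ℤ) x y l)) else 1)
        = Fk x * ∏ i : Fin (m+1), ENNReal.ofReal (sphInd d lam (x i - y)) := by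
      rw [Fin.prod_univ_castSucc]
      have hlast : (∏ l : Fin (m+1+1),
          if ((Fin.last (m+1) : Fin (m+1+1)) : ℕ) < (l : ℕ) then
            ENNReal.ofReal (sphInd d lam (Fin.snoc (α := fun _ => Fin d → ℤ) x y (Fin.last (m+1)) - Fin.snoc (α := fun _ => Fin d → ℤ) x y l)) else 1)
          = 1 := by
        refine Finset.prod_eq_one fun l _ => if_neg ?_
        have := l.isLt
        simp only [Fin.val_last]
        omega
      rw [hlast, mul_one]
      have hrow : ∀ i : Fin (m+1), (∏ l : Fin (m+1+1),
          if ((i.castSucc : Fin (m+1+1)) : ℕ) < (l : ℕ) then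
            ENNReal.ofReal (sphInd d lam (Fin.snoc (α := fun _ => Fin d → ℤ) x y i.castSucc - Fin.snoc (α := fun _ => Fin d → ℤ) x y l)) else 1)
          = (∏ l : Fin (m+1),
              if (i : ℕ) < (l : ℕ) then ENNReal.ofReal (sphInd d lam (x i - x l)) else 1) *
            ENNReal.ofReal (sphInd d lam (x i - y)) := by
        intro i
        rw [Fin.prod_univ_castSucc]
        simp [i.isLt]
      rw [Finset.prod_congr rfl fun i _ => hrow i, Finset.prod_mul_distrib, hFk]
    rw [h1, h2]
    ring
  -- pointwise bound on the inner sum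
  have hbound : ∀ x : Fin (m+1) → Fin d → ℤ,
      Fk x * ∑' y : Fin d → ℤ, ENNReal.ofReal (f (Fin.last (m+1)) y) *
          ∏ i : Fin (m+1), ENNReal.ofReal (sphInd d lam (x i - y))
        ≤ ENNReal.ofReal B * ENNReal.ofReal (M (m+1)) * C * Fk x := by
    intro x
    by_cases hF : Fk x = 0
    · simp [hF]
    · have hfac : ∀ i l : Fin (m+1), (i : ℕ) < (l : ℕ) → x i - x l ∈ sph d lam := by
        intro i l hil
        by_contra hc
        apply hF
        refine Finset.prod_eq_zero (Finset.mem_univ i) ?_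
        refine Finset.prod_eq_zero (Finset.mem_univ l) ?_
        rw [if_pos hil]
        have : sphInd d lam (x i - x l) = 0 := if_neg hc
        simp [this]
      have hsep : ∀ i l : Fin (m+1), i ≠ l → x i - x l ∈ sph d lam := by
        intro i l hne
        rcases Nat.lt_or_ge (i : ℕ) (l : ℕ) with h | h
        · exact hfac i l h
        · have h' : (l : ℕ) < (i : ℕ) := by
            rcases Nat.lt_or_ge (l : ℕ) (i : ℕ) with h2 | h2
            · exact h2
            · exact absurd (Fin.ext (le_antisymm h2 h)) hne
          have hm := hfac l i h'
          have hsq : ∀ j, (x i j - x l j) ^ 2 = (x l j - x i j) ^ 2 := fun j => by ring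
          simp only [sph, Set.mem_setOf_eq, Pi.sub_apply] at hm ⊢
          rw [Finset.sum_congr rfl fun j _ => hsq j]
          exact hm
      have hFone : Fk x = 1 := by
        rw [hFk]
        refine Finset.prod_eq_one fun i _ => Finset.prod_eq_one fun l _ => ?_
        split
        · next h =>
            have hmem := hfac i l h
            simp only [sph, Set.mem_setOf_eq] at hmem
            have h2 : sphInd d lam (x i - x l) = 1 := if_pos hmem
            rw [h2, ENNReal.ofReal_one]
        · rfl
      have hBx := hB x hsep
      have hnnsum : (0:ℝ) ≤ ∑' y : Fin d → ℤ, ∏ i, sphInd d lam (x i - y) :=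
        tsum_nonneg fun y => Finset.prod_nonneg fun i _ => sphInd_nonneg _ _ _
      have hBMk : 0 ≤ B * M (m+1) := hnnsum.trans hBx
      have hBnn : 0 ≤ B := by nlinarith [hM (m+1)]
      have hyle : ∀ y : Fin d → ℤ, ENNReal.ofReal (f (Fin.last (m+1)) y) ≤ C := by
        intro y
        rw [hC, eLpNorm_exponent_top, eLpNormEssSup_count]
        have h1 : ENNReal.ofReal (f (Fin.last (m+1)) y) = (‖f (Fin.last (m+1)) y‖₊ : ℝ≥0∞) :=
          (Real.enorm_eq_ofReal (hf _ y)).symm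
        rw [h1]
        exact le_iSup (fun a => (‖f (Fin.last (m+1)) a‖₊ : ℝ≥0∞)) y
      calc Fk x * ∑' y : Fin d → ℤ, ENNReal.ofReal (f (Fin.last (m+1)) y) *
              ∏ i : Fin (m+1), ENNReal.ofReal (sphInd d lam (x i - y))
          = ∑' y : Fin d → ℤ, ENNReal.ofReal (f (Fin.last (m+1)) y) *
              ∏ i : Fin (m+1), ENNReal.ofReal (sphInd d lam (x i - y)) := by
            rw [hFone, one_mul]
        _ ≤ ∑' y : Fin d → ℤ, C * ∏ i : Fin (m+1), ENNReal.ofReal (sphInd d lam (x i - y)) :=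
            ENNReal.tsum_le_tsum fun y => mul_le_mul_left (hyle y) _
        _ = C * ∑' y : Fin d → ℤ, ∏ i : Fin (m+1), ENNReal.ofReal (sphInd d lam (x i - y)) :=
            ENNReal.tsum_mul_left
        _ = C * ENNReal.ofReal (∑' y : Fin d → ℤ, ∏ i, sphInd d lam (x i - y)) := by
            rw [tsum_ind_eq d lam (m+1) hk0 x]
        _ ≤ C * ENNReal.ofReal (B * M (m+1)) := mul_le_mul_right (ENNReal.ofReal_le_ofReal hBx) _
        _ = ENNReal.ofReal B * ENNReal.ofReal (M (m+1)) * C * Fk x := by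
            rw [hFone, ENNReal.ofReal_mul hBnn]
            ring
  -- rewrite the (k+1)-fold sum
  have hsum : (∑' x : Fin (m+1+1) → Fin d → ℤ,
        (∏ i, ENNReal.ofReal (f i (x i))) *
          ∏ i : Fin (m+1+1), ∏ l : Fin (m+1+1),
            if (i : ℕ) < (l : ℕ) then ENNReal.ofReal (sphInd d lam (x i - x l)) else 1)
      = ∑' x : Fin (m+1) → Fin d → ℤ, P x * Fk x *
          ∑' y : Fin d → ℤ, ENNReal.ofReal (f (Fin.last (m+1)) y) *
            ∏ i : Fin (m+1), ENNReal.ofReal (sphInd d lam (x i - y)) := by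
    rw [← Equiv.tsum_eq (Fin.snocEquiv (fun _ : Fin (m+1+1) => Fin d → ℤ))]
    rw [ENNReal.tsum_prod']
    rw [ENNReal.tsum_comm]
    refine tsum_congr fun x => ?_
    rw [← ENNReal.tsum_mul_left]
    exact tsum_congr fun y => key y x
  set a := ∏ i ∈ Finset.range m, M (i + 1) with ha
  have apos : 0 < a := Finset.prod_pos fun i _ => hM _
  have hMk := hM (m+1)
  have hoa0 : ENNReal.ofReal a ≠ 0 := (ENNReal.ofReal_pos.mpr apos).ne'
  have hoat : ENNReal.ofReal a ≠ ⊤ := ENNReal.ofReal_ne_top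
  have hoM0 : ENNReal.ofReal (M (m+1)) ≠ 0 := (ENNReal.ofReal_pos.mpr hMk).ne'
  have hoMt : ENNReal.ofReal (M (m+1)) ≠ ⊤ := ENNReal.ofReal_ne_top
  have goalEq1 : ΛKsimplex d lam (m+1+1) M f
      = (ENNReal.ofReal (a * M (m+1)))⁻¹ *
          ∑' x : Fin (m+1+1) → Fin d → ℤ,
            (∏ i, ENNReal.ofReal (f i (x i))) *
              ∏ i : Fin (m+1+1), ∏ l : Fin (m+1+1),
                if (i : ℕ) < (l : ℕ) then ENNReal.ofReal (sphInd d lam (x i - x l)) else 1 := by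
    rw [ΛKsimplex]
    congr 2
    rw [show m + 1 + 1 - 1 = m + 1 from rfl, Finset.prod_range_succ, ha]
  have goalEq2 : ΛKsimplex d lam (m+1) M (fun i => f i.castSucc)
      = (ENNReal.ofReal a)⁻¹ * ∑' x : Fin (m+1) → Fin d → ℤ, P x * Fk x := rfl
  rw [goalEq1, goalEq2, hsum]
  have hSS : (∑' x : Fin (m+1) → Fin d → ℤ, P x * Fk x *
        ∑' y : Fin d → ℤ, ENNReal.ofReal (f (Fin.last (m+1)) y) *
          ∏ i : Fin (m+1), ENNReal.ofReal (sphInd d lam (x i - y)))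
      ≤ ENNReal.ofReal B * ENNReal.ofReal (M (m+1)) * C *
          ∑' x : Fin (m+1) → Fin d → ℤ, P x * Fk x := by
    rw [← ENNReal.tsum_mul_left]
    refine ENNReal.tsum_le_tsum fun x => ?_
    calc P x * Fk x * ∑' y : Fin d → ℤ, ENNReal.ofReal (f (Fin.last (m+1)) y) *
            ∏ i : Fin (m+1), ENNReal.ofReal (sphInd d lam (x i - y))
        = P x * (Fk x * ∑' y : Fin d → ℤ, ENNReal.ofReal (f (Fin.last (m+1)) y) *
            ∏ i : Fin (m+1), ENNReal.ofReal (sphInd d lam (x i - y))) := by ring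
      _ ≤ P x * (ENNReal.ofReal B * ENNReal.ofReal (M (m+1)) * C * Fk x) :=
          mul_le_mul_right (hbound x) _
      _ = ENNReal.ofReal B * ENNReal.ofReal (M (m+1)) * C * (P x * Fk x) := by ring
  calc (ENNReal.ofReal (a * M (m+1)))⁻¹ *
        ∑' x : Fin (m+1) → Fin d → ℤ, P x * Fk x *
          ∑' y : Fin d → ℤ, ENNReal.ofReal (f (Fin.last (m+1)) y) *
            ∏ i : Fin (m+1), ENNReal.ofReal (sphInd d lam (x i - y))
      ≤ (ENNReal.ofReal (a * M (m+1)))⁻¹ *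
          (ENNReal.ofReal B * ENNReal.ofReal (M (m+1)) * C *
            ∑' x : Fin (m+1) → Fin d → ℤ, P x * Fk x) := mul_le_mul_right hSS _
    _ = ENNReal.ofReal B * C *
          ((ENNReal.ofReal a)⁻¹ * ∑' x : Fin (m+1) → Fin d → ℤ, P x * Fk x) := by
        rw [ENNReal.ofReal_mul apos.le, ENNReal.mul_inv (Or.inl hoa0) (Or.inl hoat)]
        have hrearr : (ENNReal.ofReal a)⁻¹ * (ENNReal.ofReal (M (m+1)))⁻¹ *
              (ENNReal.ofReal B * ENNReal.ofReal (M (m+1)) * C *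
                ∑' x : Fin (m+1) → Fin d → ℤ, P x * Fk x)
            = ((ENNReal.ofReal (M (m+1)))⁻¹ * ENNReal.ofReal (M (m+1))) *
              (ENNReal.ofReal B * C *
                ((ENNReal.ofReal a)⁻¹ * ∑' x : Fin (m+1) → Fin d → ℤ, P x * Fk x)) := by
          ring
        rw [hrearr, ENNReal.inv_mul_cancel hoM0 hoMt, one_mul]
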